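/- For all octonionic column vectors V, W ∈ 𝕆ⁿ, the vector associator [W, V, V] := (WV†)V − W(V†V) vanishes identically; in particular, taking W = V, one has [V, V, V] = (VV†)V − V(V†V) = 0. -/

import Mathlib

noncomputable section

open scoped BigOperators Matrix

/-- The octonions `𝕆`, realized as the Cayley–Dickson double of the quaternions. -/
def Oct : Type := Quaternion ℝ × Quaternion ℝ

namespace Oct

instance : AddCommGroup Oct := inferInstanceAs (AddCommGroup (Quaternion ℝ × Quaternion ℝ))
instance : Module ℝ Oct := inferInstanceAs (Module ℝ (Quaternion ℝ × Quaternion ℝ))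

instance : One Oct := ⟨((1 : Quaternion ℝ), (0 : Quaternion ℝ))⟩

/-- Cayley–Dickson multiplication on `ℍ × ℍ`:
`(a, b) * (c, d) = (a c − d̄ b, d a + b c̄)`. -/
instance : Mul Oct :=
  ⟨fun x y => (x.1 * y.1 - star y.2 * x.2, y.2 * x.1 + x.2 * star y.1)⟩

theorem mul_def (x y : Oct) :
    x * y = (x.1 * y.1 - star y.2 * x.2, y.2 * x.1 + x.2 * star y.1) := rfl

@[simp] theorem fst_zero : (0 : Oct).1 = 0 := rfl
@[simp] theorem snd_zero : (0 : Oct).2 = 0 := rfl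
@[simp] theorem fst_one : (1 : Oct).1 = 1 := rfl
@[simp] theorem snd_one : (1 : Oct).2 = 0 := rfl
@[simp] theorem fst_add (x y : Oct) : (x + y).1 = x.1 + y.1 := rfl
@[simp] theorem snd_add (x y : Oct) : (x + y).2 = x.2 + y.2 := rfl

instance : NonAssocRing Oct :=
  { (inferInstance : AddCommGroup Oct), (inferInstance : One Oct), (inferInstance : Mul Oct) with
    left_distrib := by
      intro x y z
      refine Prod.ext ?_ ?_ <;>
        simp only [mul_def, fst_add, snd_add, star_add, Prod.fst_add, Prod.snd_add] <;> (try erw [Prod.fst_add]) <;> (try erw [Prod.snd_add]) <;> noncomm_ring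
    right_distrib := by
      intro x y z
      refine Prod.ext ?_ ?_ <;>
        simp only [mul_def, fst_add, snd_add, star_add, Prod.fst_add, Prod.snd_add] <;> (try erw [Prod.fst_add]) <;> (try erw [Prod.snd_add]) <;> noncomm_ring
    zero_mul := by
      intro x
      refine Prod.ext ?_ ?_ <;> simp [mul_def]
    mul_zero := by
      intro x
      refine Prod.ext ?_ ?_ <;> simp [mul_def]
    one_mul := by
      intro x
      refine Prod.ext ?_ ?_ <;> simp [mul_def]
    mul_one := by
      intro x
      refine Prod.ext ?_ ?_ <;> simp [mul_def] }

/-- Octonionic conjugation `a ↦ ā`. -/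
def conj (x : Oct) : Oct := (star x.1, -x.2)

/-- The canonical embedding of `ℝ` into `𝕆`. -/
def oR (r : ℝ) : Oct := r • (1 : Oct)

/-- Real part `Re(a) = (a + ā)/2`, as an octonion. -/
def re (x : Oct) : Oct := (2 : ℝ)⁻¹ • (x + conj x)

/-- Imaginary part `Im(a) = (a − ā)/2`, as an octonion. -/
def im (x : Oct) : Oct := (2 : ℝ)⁻¹ • (x - conj x)

/-- The coefficient of `1` in an octonion (real-part coefficient). -/
def reCoeff (x : Oct) : ℝ := x.1.re

/-- Inner product `a·b = (a b̄ + b ā)/2`, a real octonion. -/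
def dot (a b : Oct) : Oct := (2 : ℝ)⁻¹ • (a * conj b + b * conj a)

/-- Norm `|a| = √(a ā)`. -/
def onorm (a : Oct) : ℝ := Real.sqrt (reCoeff (a * conj a))

/-- Octonionic associator `[a,b,c] = (ab)c − a(bc)`. -/
def assoc (a b c : Oct) : Oct := a * b * c - a * (b * c)

/-- The general 2×2 octonionic Hermitian matrix `[[p, a], [ā, m]]`. -/
def herm2 (p m : ℝ) (a : Oct) : Matrix (Fin 2) (Fin 2) Oct := !![oR p, a; conj a, oR m]

/-- `J(r̂) = [[0, −r̂], [r̂, 0]]`. -/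
def J (r : Oct) : Matrix (Fin 2) (Fin 2) Oct := !![0, -r; r, 0]

/-- The set `𝔸` of matrices `p I + q J(r̂)` with `p, q ∈ ℝ`, `q ≠ 0`,
and `r̂` a pure imaginary unit octonion (equivalently `r̂ ² = −1`). -/
def memA (A : Matrix (Fin 2) (Fin 2) Oct) : Prop :=
  ∃ (p q : ℝ) (r : Oct), q ≠ 0 ∧ r * r = -1 ∧
    A = p • (1 : Matrix (Fin 2) (Fin 2) Oct) + q • J r

/-- The set `𝕍` of vectors `(x, y)ᵀ ∈ 𝕆²` with `|x|² = |y|²` and `x·y = 0`. -/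
def memV (v : Fin 2 → Oct) : Prop :=
  onorm (v 0) ^ 2 = onorm (v 1) ^ 2 ∧ dot (v 0) (v 1) = 0

/-- The general 3×3 octonionic Hermitian matrix `[[p, a, b̄], [ā, m, c], [b, c̄, n]]`. -/
def herm3 (p m n : ℝ) (a b c : Oct) : Matrix (Fin 3) (Fin 3) Oct :=
  !![oR p, a, conj b; conj a, oR m, c; b, conj c, oR n]

/-- Vector associator `[U,V,W] = (U V†) W − U (V† W)`. -/
def vAssoc {n : ℕ} (U V W : Fin n → Oct) : Fin n → Oct :=
  fun i => (∑ j, (U i * conj (V j)) * W j) - U i * (∑ j, conj (V j) * W j)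

/-- Outer product `U V†`, the matrix with `(i,j)` entry `U_i V̄_j`. -/
def outer {n : ℕ} (U V : Fin n → Oct) : Matrix (Fin n) (Fin n) Oct :=
  Matrix.of fun i j => U i * conj (V j)

/-- `Ã = A − (tr A) I`. -/
def tilde {n : ℕ} (A : Matrix (Fin n) (Fin n) Oct) : Matrix (Fin n) (Fin n) Oct :=
  A - Matrix.of fun i j => if i = j then Matrix.trace A else 0

end Oct

open Oct

theorem mul_conj_mul_self (w a : Oct) : (w * conj a) * a = w * (conj a * a) := by
  rw [mul_def w (conj a * a), mul_def (w * conj a), mul_def w, mul_def (conj a)]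
  obtain ⟨w1, w2⟩ := w; obtain ⟨a1, a2⟩ := a
  have h1 := Quaternion.star_mul_self a1
  have h1' := Quaternion.self_mul_star a1
  have h2 := Quaternion.star_mul_self a2
  have h2' := Quaternion.self_mul_star a2
  refine Prod.ext ?_ ?_ <;>
    simp only [mul_def, conj, star_neg, star_star, neg_neg, neg_mul, mul_neg,
      sub_neg_eq_add, star_mul', add_neg_cancel, star_zero, zero_mul, mul_zero, sub_zero]
  · have e : star a2 * (a2 * w1) = w1 * (star a2 * a2) := by
      rw [← mul_assoc, h2, Quaternion.coe_commutes]
    simp only [add_mul, mul_neg, mul_add, neg_add, neg_neg, mul_assoc, e]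
    noncomm_ring
  · have e : a2 * (star a2 * w2) = w2 * (star a2 * a2) := by
      rw [← mul_assoc, h2', h2, Quaternion.coe_commutes]
    have e1 : w2 * (a1 * star a1) = w2 * (star a1 * a1) := by rw [h1', h1]
    have es : star (star a1 * a1 + star a2 * a2) = star a1 * a1 + star a2 * a2 := by
      rw [h1, h2, ← Quaternion.coe_add, Quaternion.star_coe]
    simp only [es, add_mul, mul_add, neg_mul, mul_assoc, e, e1]
    abel

theorem vAssoc_self {n : ℕ} (V W : Fin n → Oct) : vAssoc W V V = 0 := by
  funext i
  simp only [vAssoc, Finset.mul_sum, mul_conj_mul_self, Pi.zero_apply, sub_self]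


/-- the vector associator `[W, V, V] = (WV†)V − W(V†V)` vanishes
identically; in particular `[V, V, V] = 0`. -/
theorem stmt_12 (n : ℕ) (V W : Fin n → Oct) :
    vAssoc W V V = 0 ∧ vAssoc V V V = 0 :=
  ⟨vAssoc_self V W, vAssoc_self V V⟩
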